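/- arXiv:0908.1328 — 2 statements merged into one kernel-verified Lean document; each statement's English description precedes it below -/
import Mathlib

section
/- For all natural numbers n and real parameters a, b, x (with nonzero denominators), the Jacobi polynomials satisfy P_n^{(a,b+1)}(x) = (1/(n+1))·(P_{n+1}^{(a,b)})'(x) − (2(b+1+n)/((2n+2+a+b)(2n+a+b+1)))·(P_n^{(a,b)})'(x). -/
/-!
Write `y = (1 - x) / 2`. Both sides are polynomials in `y` of degree `n`, and `d/dx = -(1/2) d/dy`
lowers the index of the coefficients by one, so the identity holds coefficientwise. After peeling
one factor off each rising factorial, every coefficient identity becomes a rational identity in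
`a`, `n + a + b + 1`, `n` and `k`. The top coefficient of `(P_n^{(a,b)})'` that this comparison
needs vanishes because `(-n)_{n+1} = 0`.
-/

/-- Rising factorial `(a)_k = a(a+1)⋯(a+k-1)`. -/
noncomputable def rf (a : ℝ) (k : ℕ) : ℝ := ∏ j ∈ Finset.range k, (a + j)

/-- Monic Jacobi polynomials
`P_n^{(a,b)}(x) = ((a+1)_n 2^n / (n+a+b+1)_n) ∑_{k=0}^n
  ((-n)_k (n+a+b+1)_k / ((a+1)_k k!)) ((1-x)/2)^k`. -/
noncomputable def jacobi (a b : ℝ) (n : ℕ) (x : ℝ) : ℝ :=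
  rf (a + 1) n * 2 ^ n / rf ((n : ℝ) + a + b + 1) n *
    ∑ k ∈ Finset.range (n + 1),
      rf (-(n : ℝ)) k * rf ((n : ℝ) + a + b + 1) k / (rf (a + 1) k * (k.factorial : ℝ)) *
        ((1 - x) / 2) ^ k

/-- Derivative of the monic Jacobi polynomial with respect to `x`. -/
noncomputable def jacobiDeriv (a b : ℝ) (n : ℕ) (x : ℝ) : ℝ := deriv (jacobi a b n) x

open Finset

lemma rf_succ (a : ℝ) (k : ℕ) : rf a (k + 1) = rf a k * (a + k) :=
  prod_range_succ _ _

lemma rf_succ' (a : ℝ) (k : ℕ) : rf a (k + 1) = a * rf (a + 1) k := by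
  rw [rf, prod_range_succ', Nat.cast_zero, add_zero, mul_comm, rf]
  congr 1
  refine prod_congr rfl fun j _ => ?_
  push_cast
  ring

lemma rf_neg_natCast_succ (n : ℕ) : rf (-(n : ℝ)) (n + 1) = 0 :=
  prod_eq_zero (self_mem_range_succ n) (neg_add_cancel _)

lemma hasDerivAt_sum_mul_one_sub_div_two_pow (f : ℕ → ℝ) (m : ℕ) (x : ℝ) :
    HasDerivAt (fun x => ∑ k ∈ range (m + 1), f k * ((1 - x) / 2) ^ k)
      (-(1 / 2) * ∑ k ∈ range m, ((k : ℝ) + 1) * f (k + 1) * ((1 - x) / 2) ^ k) x := by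
  have hy : HasDerivAt (fun x : ℝ => (1 - x) / 2) (-(1 / 2)) x :=
    (((hasDerivAt_id x).const_sub 1).div_const 2).congr_deriv (by norm_num)
  refine (HasDerivAt.fun_sum fun k _ => (hy.fun_pow k).const_mul (f k)).congr_deriv ?_
  rw [sum_range_succ', mul_sum]
  simp only [Nat.cast_zero, zero_mul, mul_zero, add_zero, Nat.add_sub_cancel, Nat.cast_succ]
  refine sum_congr rfl fun k _ => ?_
  ring

/-- The coefficient of `((1 - x) / 2) ^ k` in `P_n^{(a,b)}`, where `c` stands for `n + a + b + 1`. -/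
noncomputable def jacobiCoeff (a c : ℝ) (n k : ℕ) : ℝ :=
  rf (a + 1) n * 2 ^ n / rf c n *
    (rf (-(n : ℝ)) k * rf c k / (rf (a + 1) k * (k.factorial : ℝ)))

lemma jacobi_eq_sum (a b : ℝ) (n : ℕ) (x : ℝ) :
    jacobi a b n x =
      ∑ k ∈ range (n + 1), jacobiCoeff a ((n : ℝ) + a + b + 1) n k * ((1 - x) / 2) ^ k := by
  simp only [jacobi, jacobiCoeff, mul_sum, mul_assoc]

lemma jacobiCoeff_succ_self (a c : ℝ) (n : ℕ) : jacobiCoeff a c n (n + 1) = 0 := by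
  simp [jacobiCoeff, rf_neg_natCast_succ]

lemma jacobiDeriv_eq_sum (a b : ℝ) (n : ℕ) (x : ℝ) :
    jacobiDeriv a b n x = -(1 / 2) * ∑ k ∈ range n,
      ((k : ℝ) + 1) * jacobiCoeff a ((n : ℝ) + a + b + 1) n (k + 1) * ((1 - x) / 2) ^ k := by
  rw [jacobiDeriv, funext (jacobi_eq_sum a b n),
    (hasDerivAt_sum_mul_one_sub_div_two_pow _ n x).deriv]

lemma jacobiCoeff_parameter_shift (a c : ℝ) (n k : ℕ) (hk : rf (a + 1) (k + 1) ≠ 0)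
    (hc : rf c (n + 1) ≠ 0) (hcn : c + 1 + n ≠ 0) :
    jacobiCoeff a (c + 1) n k = -(((k : ℝ) + 1) / 2) *
      (jacobiCoeff a (c + 1) (n + 1) (k + 1) / (n + 1) -
        2 * (c - a) / ((c + 1 + n) * (c + n)) * jacobiCoeff a c n (k + 1)) := by
  obtain ⟨hak, hak'⟩ := mul_ne_zero_iff.mp ((rf_succ _ _).symm.trans_ne hk)
  obtain ⟨hc0, hc1⟩ := mul_ne_zero_iff.mp ((rf_succ' _ _).symm.trans_ne hc)
  have hcn' : c + n ≠ 0 := (mul_ne_zero_iff.mp ((rf_succ _ _).symm.trans_ne hc)).2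
  have hrf : rf c n = c * rf (c + 1) n / (c + n) := by
    rw [eq_div_iff hcn', ← rf_succ, rf_succ']
  simp only [jacobiCoeff]
  push_cast
  rw [rf_succ' (-((n : ℝ) + 1)), rf_succ' c k, hrf, show -((n : ℝ) + 1) + 1 = -n by ring]
  simp only [rf_succ, Nat.factorial_succ, pow_succ]
  push_cast
  field_simp
  ring

theorem jacobi_parameter_shift_b_general (n : ℕ) (a b x : ℝ)
    (hpoch1 : ∀ k ≤ n + 1, rf (a + 1) k ≠ 0)
    (hpoch2 : ∀ m ≤ n + 1, rf ((m : ℝ) + a + b + 1) m ≠ 0)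
    (h1 : 2 * (n : ℝ) + 2 + a + b ≠ 0) (h2 : 2 * (n : ℝ) + a + b + 1 ≠ 0) :
    jacobi a (b + 1) n x =
      (1 / ((n : ℝ) + 1)) * jacobiDeriv a b (n + 1) x -
        (2 * (b + 1 + n) / ((2 * n + 2 + a + b) * (2 * n + a + b + 1))) *
          jacobiDeriv a b n x := by
  have hc : rf ((n : ℝ) + a + b + 1) (n + 1) ≠ 0 := by
    rw [rf_succ]
    exact mul_ne_zero (hpoch2 n n.le_succ) (by convert h2 using 1; ring)
  have hcn : (n : ℝ) + a + b + 1 + 1 + n ≠ 0 := by convert h1 using 1; ring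
  have hderiv : jacobiDeriv a b n x = -(1 / 2) * ∑ k ∈ range (n + 1),
      ((k : ℝ) + 1) * jacobiCoeff a ((n : ℝ) + a + b + 1) n (k + 1) * ((1 - x) / 2) ^ k := by
    rw [jacobiDeriv_eq_sum, sum_range_succ _ n, jacobiCoeff_succ_self, mul_zero, zero_mul,
      add_zero]
  rw [jacobi_eq_sum, jacobiDeriv_eq_sum, hderiv, mul_sum, mul_sum, mul_sum, mul_sum,
    ← sum_sub_distrib]
  refine sum_congr rfl fun k hk => ?_
  have hkn : k + 1 ≤ n + 1 := Nat.succ_le_succ (Nat.lt_succ_iff.mp (mem_range.mp hk))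
  push_cast
  rw [show (n : ℝ) + 1 + a + b + 1 = (n : ℝ) + a + b + 1 + 1 by ring,
    show (n : ℝ) + a + (b + 1) + 1 = (n : ℝ) + a + b + 1 + 1 by ring,
    jacobiCoeff_parameter_shift a _ n k (hpoch1 (k + 1) hkn) hc hcn]
  ring

theorem jacobi_parameter_shift_b (n : ℕ) (a b x : ℝ)
    (hpoch1 : ∀ k ≤ n + 1, rf (a + 1) k ≠ 0)
    (hpoch2 : ∀ m ≤ n + 1, rf ((m : ℝ) + a + b + 1) m ≠ 0)
    (hpoch3 : rf ((n : ℝ) + a + b + 2) n ≠ 0)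
    (h1 : 2 * (n : ℝ) + 2 + a + b ≠ 0) (h2 : 2 * (n : ℝ) + a + b + 1 ≠ 0) :
    jacobi a (b + 1) n x =
      (1 / ((n : ℝ) + 1)) * jacobiDeriv a b (n + 1) x -
        (2 * (b + 1 + n) / ((2 * n + 2 + a + b) * (2 * n + a + b + 1))) *
          jacobiDeriv a b n x :=
  jacobi_parameter_shift_b_general n a b x hpoch1 hpoch2 h1 h2
end

section
/- For all natural numbers n ≥ 1, real q with 0 < q < 1, and real x ≠ 0, the discrete q-Hermite I polynomials satisfy the lowering relation dH_n(x) = ((1−q^n)/(1−q))·H_{n-1}(x), where dH_n(x) = (H_n(qx) − H_n(x))/((q−1)x). -/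
/-- The q-shifted factorial `(a;q)_k = ∏_{j=0}^{k-1}(1 - a q^j)`. -/
noncomputable def qpoch (a q : ℝ) (k : ℕ) : ℝ := ∏ j ∈ Finset.range k, (1 - a * q ^ j)

/-- The discrete q-Hermite I polynomials
`H_n(x) = q^{n(n-1)/2} ∑_{k=0}^n ((q^{-n};q)_k (x^{-1};q)_k / (q;q)_k) (-qx)^k`. -/
noncomputable def qHermiteI (q : ℝ) (n : ℕ) (x : ℝ) : ℝ :=
  q ^ (n * (n - 1) / 2) *
    ∑ k ∈ Finset.range (n + 1),
      qpoch (q ^ (-(n : ℤ))) q k * qpoch x⁻¹ q k / qpoch q q k * (-(q * x)) ^ k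

/-- The q-difference `dH_n(x) = (H_n(qx) − H_n(x)) / ((q−1)x)`. -/
noncomputable def qHermiteIDiff (q : ℝ) (n : ℕ) (x : ℝ) : ℝ :=
  (qHermiteI q n (q * x) - qHermiteI q n x) / ((q - 1) * x)

open Finset

lemma qpoch_x_prod (q x : ℝ) (hx : x ≠ 0) (k : ℕ) :
    qpoch x⁻¹ q k * (-(q * x)) ^ k = (-q) ^ k * ∏ j ∈ range k, (x - q ^ j) := by
  unfold qpoch
  have h1 : (-(q * x)) ^ k = (-q) ^ k * x ^ k := by
    rw [show -(q*x) = (-q)*x by ring, mul_pow]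
  rw [h1, ← mul_assoc, mul_comm (∏ j ∈ range k, (1 - x⁻¹ * q ^ j)) ((-q)^k), mul_assoc]
  congr 1
  have h2 : x ^ k = ∏ _j ∈ range k, x := by simp
  rw [h2, ← Finset.prod_mul_distrib]
  apply Finset.prod_congr rfl
  intro j _
  field_simp

lemma key_prod (q x : ℝ) (m : ℕ) :
    (∏ j ∈ range (m + 1), (q * x - q ^ j)) - ∏ j ∈ range (m + 1), (x - q ^ j)
      = (q ^ (m + 1) - 1) * x * ∏ j ∈ range m, (x - q ^ j) := by
  rw [Finset.prod_range_succ' (fun j => q * x - q ^ j), Finset.prod_range_succ]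
  have h1 : (∏ j ∈ range m, (q * x - q ^ (j + 1))) = q ^ m * ∏ j ∈ range m, (x - q ^ j) := by
    have h : ∀ j ∈ range m, q * x - q ^ (j + 1) = q * (x - q ^ j) := by
      intro j _; ring
    rw [Finset.prod_congr rfl h, Finset.prod_mul_distrib, Finset.prod_const, Finset.card_range]
  rw [h1]
  ring

lemma qpoch_q_pos {q : ℝ} (hq0 : 0 < q) (hq1 : q < 1) (k : ℕ) : 0 < qpoch q q k := by
  unfold qpoch
  apply Finset.prod_pos
  intro j _
  have : q * q ^ j ≤ q := by
    nlinarith [pow_le_one₀ (le_of_lt hq0) (le_of_lt hq1) (n := j)]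
  linarith

lemma qpoch_q_succ (q : ℝ) (k : ℕ) :
    qpoch q q (k + 1) = qpoch q q k * (1 - q ^ (k + 1)) := by
  unfold qpoch
  rw [Finset.prod_range_succ, pow_succ']

lemma qpoch_neg_shift (q : ℝ) (hq : q ≠ 0) (m k : ℕ) :
    qpoch (q ^ (-((m + 1 : ℕ) : ℤ))) q (k + 1)
      = (1 - q ^ (-((m + 1 : ℕ) : ℤ))) * qpoch (q ^ (-(m : ℤ))) q k := by
  unfold qpoch
  rw [Finset.prod_range_succ' (fun j => 1 - q ^ (-((m + 1 : ℕ) : ℤ)) * q ^ j),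
      pow_zero, mul_one, mul_comm]
  congr 1
  apply Finset.prod_congr rfl
  intro j _
  have e1 : q ^ (-((m + 1 : ℕ) : ℤ)) = q⁻¹ * q ^ (-(m : ℤ)) := by
    rw [← zpow_neg_one, ← zpow_add₀ hq]
    congr 1
    push_cast
    ring
  have h : q ^ (-((m + 1 : ℕ) : ℤ)) * q ^ (j + 1) = q ^ (-(m : ℤ)) * q ^ j := by
    rw [e1, pow_succ' q j]
    field_simp
  rw [h]

lemma expand_qHermiteI (q : ℝ) (N : ℕ) (y : ℝ) (hy : y ≠ 0) :
    qHermiteI q N y = q ^ (N * (N - 1) / 2) *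
      ∑ k ∈ range (N + 1),
        qpoch (q ^ (-(N : ℤ))) q k / qpoch q q k *
          ((-q) ^ k * ∏ j ∈ range k, (y - q ^ j)) := by
  unfold qHermiteI
  congr 1
  apply Finset.sum_congr rfl
  intro k _
  rw [← qpoch_x_prod q y hy k]
  ring

theorem qHermite_lowering (n : ℕ) (hn : 1 ≤ n) (q : ℝ) (hq0 : 0 < q) (hq1 : q < 1)
    (x : ℝ) (hx : x ≠ 0) :
    qHermiteIDiff q n x = ((1 - q ^ n) / (1 - q)) * qHermiteI q (n - 1) x := by
  obtain ⟨m, rfl⟩ : ∃ m, n = m + 1 := ⟨n - 1, (Nat.succ_pred_eq_of_pos hn).symm⟩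
  have hq : q ≠ 0 := ne_of_gt hq0
  have hqx : q * x ≠ 0 := mul_ne_zero hq hx
  have h1q : (1 : ℝ) - q ≠ 0 := by linarith
  have hq1x : (q - 1) * x ≠ 0 := mul_ne_zero (by linarith) hx
  unfold qHermiteIDiff
  rw [div_eq_iff hq1x]
  simp only [Nat.add_sub_cancel]
  rw [expand_qHermiteI q (m+1) (q*x) hqx, expand_qHermiteI q (m+1) x hx,
      expand_qHermiteI q m x hx]
  simp only [Nat.add_sub_cancel]
  rw [← mul_sub, ← Finset.sum_sub_distrib]
  have hstep : ∀ k ∈ range (m + 1 + 1),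
      (qpoch (q ^ (-((m+1 : ℕ) : ℤ))) q k / qpoch q q k *
          ((-q) ^ k * ∏ j ∈ range k, (q * x - q ^ j)) -
        qpoch (q ^ (-((m+1 : ℕ) : ℤ))) q k / qpoch q q k *
          ((-q) ^ k * ∏ j ∈ range k, (x - q ^ j)))
      = qpoch (q ^ (-((m+1 : ℕ) : ℤ))) q k / qpoch q q k *
          ((-q) ^ k * ((∏ j ∈ range k, (q * x - q ^ j)) - ∏ j ∈ range k, (x - q ^ j))) := by
    intro k _; ring
  rw [Finset.sum_congr rfl hstep]
  rw [Finset.sum_range_succ' (fun k => qpoch (q ^ (-((m+1 : ℕ) : ℤ))) q k / qpoch q q k *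
          ((-q) ^ k * ((∏ j ∈ range k, (q * x - q ^ j)) - ∏ j ∈ range k, (x - q ^ j))))]
  simp only [Finset.range_zero, Finset.prod_empty, sub_self, mul_zero, add_zero]
  have hE : (m + 1) * m / 2 = m * (m - 1) / 2 + m := by
    have h1 : (m + 1) * m / 2 = Nat.choose (m + 1) 2 := by
      rw [Nat.choose_two_right]; simp
    rw [h1, Nat.choose_succ_succ, Nat.choose_one_right, Nat.choose_two_right, Nat.add_comm]
  have hu' : q ^ (-((m + 1 : ℕ) : ℤ)) = (q ^ (m + 1))⁻¹ := by
    rw [← zpow_natCast q (m+1), ← zpow_neg]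
  simp only [Finset.mul_sum, Finset.sum_mul]
  apply Finset.sum_congr rfl
  intro k hk
  rw [key_prod q x k, qpoch_neg_shift q hq m k, qpoch_q_succ q k, hE, pow_add, hu']
  have hQk : qpoch q q k ≠ 0 := ne_of_gt (qpoch_q_pos hq0 hq1 k)
  have hqk1 : (1 : ℝ) - q ^ (k + 1) ≠ 0 := by
    have : q ^ (k + 1) < 1 := pow_lt_one₀ (le_of_lt hq0) hq1 (Nat.succ_ne_zero k)
    linarith
  have hpm : q ^ (m + 1) ≠ 0 := pow_ne_zero _ hq
  field_simp
  ring
end
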